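/- arXiv:1409.8635 — 5 statements merged into one kernel-verified Lean document; each statement's English description precedes it below -/
import Mathlib

section
/- Let X be a measure space with μ(X)=1, let 0 < ε ≤ 1/2, and let (A_i)_{i<ω} be a sequence of measurable subsets of X with μ(A_i) ≥ ε for every i. Then for every k ≥ 1 there exist indices i_1 < i_2 < ... < i_k such that μ(A_{i_1} ∩ ... ∩ A_{i_k}) ≥ ε^{3^{k-1}}. -/
open MeasureTheory ENNReal

lemma incl_excl {X : Type*} [MeasurableSpace X] (μ : Measure X)
    (A : ℕ → Set X) (hmeas : ∀ i, MeasurableSet (A i)) (s : Finset ℕ) :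
    2 * ∑ i ∈ s, μ (A i) ≤ 2 * μ (⋃ i ∈ s, A i) + ∑ p ∈ s.offDiag, μ (A p.1 ∩ A p.2) := by
  induction s using Finset.induction_on with
  | empty => simp
  | insert a t hat ih =>
    have hUt : MeasurableSet (⋃ i ∈ t, A i) := t.measurableSet_biUnion (fun i _ => hmeas i)
    have key : μ (A a ∪ ⋃ i ∈ t, A i) + μ (A a ∩ ⋃ i ∈ t, A i) = μ (A a) + μ (⋃ i ∈ t, A i) :=
      measure_union_add_inter _ hUt
    have h3 : μ (A a ∩ ⋃ i ∈ t, A i) ≤ ∑ i ∈ t, μ (A a ∩ A i) := by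
      rw [Set.inter_iUnion₂]
      exact measure_biUnion_finset_le t _
    have h1 : Disjoint t.offDiag ({a} ×ˢ t) := by
      simp only [Finset.disjoint_left, Finset.mem_offDiag, Finset.mem_product,
        Finset.mem_singleton]
      rintro ⟨x, y⟩ ⟨hx, hy, hxy⟩ ⟨rfl, -⟩; exact hat hx
    have h2 : Disjoint (t.offDiag ∪ {a} ×ˢ t) (t ×ˢ {a}) := by
      simp only [Finset.disjoint_left, Finset.mem_union, Finset.mem_offDiag, Finset.mem_product,
        Finset.mem_singleton]
      rintro ⟨x, y⟩ h ⟨hx, rfl⟩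
      rcases h with ⟨-, hy, -⟩ | ⟨-, hy⟩ <;> exact hat hy
    have hsplit : ∑ p ∈ (insert a t).offDiag, μ (A p.1 ∩ A p.2)
        = ∑ p ∈ t.offDiag, μ (A p.1 ∩ A p.2)
          + (∑ i ∈ t, μ (A a ∩ A i) + ∑ i ∈ t, μ (A i ∩ A a)) := by
      rw [Finset.offDiag_insert (has := hat), Finset.sum_union h2, Finset.sum_union h1]
      simp [Finset.sum_product, add_assoc]
    have hcomm : ∑ i ∈ t, μ (A i ∩ A a) = ∑ i ∈ t, μ (A a ∩ A i) :=
      Finset.sum_congr rfl (fun i _ => by rw [Set.inter_comm])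
    rw [Finset.sum_insert hat, hsplit, Finset.set_biUnion_insert, hcomm]
    calc 2 * (μ (A a) + ∑ i ∈ t, μ (A i))
        = 2 * μ (A a) + 2 * ∑ i ∈ t, μ (A i) := by ring
      _ ≤ 2 * μ (A a) + (2 * μ (⋃ i ∈ t, A i) + ∑ p ∈ t.offDiag, μ (A p.1 ∩ A p.2)) := by
          exact add_le_add_right ih _
      _ = 2 * (μ (A a) + μ (⋃ i ∈ t, A i)) + ∑ p ∈ t.offDiag, μ (A p.1 ∩ A p.2) := by ring
      _ = 2 * (μ (A a ∪ ⋃ i ∈ t, A i) + μ (A a ∩ ⋃ i ∈ t, A i))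
            + ∑ p ∈ t.offDiag, μ (A p.1 ∩ A p.2) := by rw [key]
      _ ≤ 2 * (μ (A a ∪ ⋃ i ∈ t, A i) + ∑ i ∈ t, μ (A a ∩ A i))
            + ∑ p ∈ t.offDiag, μ (A p.1 ∩ A p.2) := by gcongr
      _ = 2 * μ (A a ∪ ⋃ i ∈ t, A i)
            + (∑ p ∈ t.offDiag, μ (A p.1 ∩ A p.2)
              + (∑ i ∈ t, μ (A a ∩ A i) + ∑ i ∈ t, μ (A a ∩ A i))) := by ring

lemma pair_lemma {X : Type*} [MeasurableSpace X] (μ : Measure X) [IsProbabilityMeasure μ]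
    (ε : ℝ) (hε : 0 < ε) (hε2 : ε ≤ 1 / 2) (A : ℕ → Set X)
    (hmeas : ∀ i, MeasurableSet (A i)) (hA : ∀ i, ENNReal.ofReal ε ≤ μ (A i)) (a : ℕ) :
    ∃ i j : ℕ, a ≤ i ∧ i < j ∧ j < a + ⌈2/ε⌉₊ ∧ ENNReal.ofReal (ε^3) ≤ μ (A i ∩ A j) := by
  set N := ⌈2/ε⌉₊ with hNdef
  set s : Finset ℕ := Finset.Ico a (a + N) with hsdef
  have hcard : s.card = N := by simp [hsdef]
  -- real arithmetic
  have hNr : 2/ε ≤ (N:ℝ) := Nat.le_ceil _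
  have hNr2 : (N:ℝ) < 2/ε + 1 := Nat.ceil_lt_add_one (by positivity)
  have hNε : 2 ≤ (N:ℝ) * ε := by rw [div_le_iff₀ hε] at hNr; linarith
  have hN1 : ((N:ℝ) - 1) * ε < 2 := by
    have : ((N:ℝ) - 1) < 2/ε := by linarith
    calc ((N:ℝ) - 1) * ε < (2/ε) * ε := by
          apply mul_lt_mul_of_pos_right this hε
      _ = 2 := by field_simp
  have hNpos : (0:ℝ) < N := by nlinarith
  have hreal : ((N:ℝ)*N - N) * ε^3 + 2 < 2 * ((N:ℝ) * ε) := by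
    have k1 : ((N:ℝ)*N - N) * ε^3 < 2 * (N * ε^2) := by
      have hp : (0:ℝ) < N * ε^2 := by positivity
      calc ((N:ℝ)*N - N) * ε^3 = (((N:ℝ) - 1) * ε) * (N * ε^2) := by ring
        _ < 2 * (N * ε^2) := mul_lt_mul_of_pos_right hN1 hp
    nlinarith [mul_nonneg (sub_nonneg.2 hNε) (by linarith : (0:ℝ) ≤ 1 - 2*ε)]
  -- suppose all off-diagonal pairs are small
  have key : ∃ p ∈ s.offDiag, ENNReal.ofReal (ε^3) ≤ μ (A p.1 ∩ A p.2) := by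
    by_contra hcon
    push_neg at hcon
    have hT : ∑ p ∈ s.offDiag, μ (A p.1 ∩ A p.2)
        ≤ (N*N - N : ℕ) * ENNReal.ofReal (ε^3) := by
      calc ∑ p ∈ s.offDiag, μ (A p.1 ∩ A p.2)
          ≤ ∑ _p ∈ s.offDiag, ENNReal.ofReal (ε^3) :=
            Finset.sum_le_sum (fun p hp => (hcon p hp).le)
        _ = (N*N - N : ℕ) * ENNReal.ofReal (ε^3) := by
            rw [Finset.sum_const, Finset.offDiag_card, hcard, nsmul_eq_mul]
    have hlow : ENNReal.ofReal ((N:ℝ) * ε) ≤ ∑ i ∈ s, μ (A i) := by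
      calc ENNReal.ofReal ((N:ℝ) * ε) = (N:ℝ≥0∞) * ENNReal.ofReal ε := by
            rw [ENNReal.ofReal_mul (Nat.cast_nonneg N), ENNReal.ofReal_natCast]
        _ = ∑ _i ∈ s, ENNReal.ofReal ε := by rw [Finset.sum_const, hcard, nsmul_eq_mul]
        _ ≤ ∑ i ∈ s, μ (A i) := Finset.sum_le_sum (fun i _ => hA i)
    have hmain : 2 * ENNReal.ofReal ((N:ℝ) * ε)
        ≤ 2 + (N*N - N : ℕ) * ENNReal.ofReal (ε^3) := by
      calc 2 * ENNReal.ofReal ((N:ℝ) * ε) ≤ 2 * ∑ i ∈ s, μ (A i) := by gcongr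
        _ ≤ 2 * μ (⋃ i ∈ s, A i) + ∑ p ∈ s.offDiag, μ (A p.1 ∩ A p.2) :=
            incl_excl μ A hmeas s
        _ ≤ 2 * 1 + (N*N - N : ℕ) * ENNReal.ofReal (ε^3) := by
            gcongr
            exact prob_le_one
        _ = 2 + (N*N - N : ℕ) * ENNReal.ofReal (ε^3) := by rw [mul_one]
    -- convert to reals
    have hNN : ((N*N - N : ℕ) : ℝ) = (N:ℝ)*N - N := by
      push_cast [Nat.cast_sub (Nat.le_mul_of_pos_left N (by exact_mod_cast hNpos))]
      ring
    have hNN0 : (0:ℝ) ≤ (N:ℝ)*N - N := by nlinarith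
    have hrw : (2 : ℝ≥0∞) + (N*N - N : ℕ) * ENNReal.ofReal (ε^3)
        = ENNReal.ofReal (2 + ((N:ℝ)*N - N) * ε^3) := by
      rw [ENNReal.ofReal_add (by norm_num) (mul_nonneg hNN0 (by positivity)),
        ENNReal.ofReal_mul hNN0]
      rw [← hNN, ENNReal.ofReal_natCast]
      norm_num
    have hrw2 : ENNReal.ofReal (2 * ((N:ℝ) * ε)) = 2 * ENNReal.ofReal ((N:ℝ) * ε) := by
      rw [ENNReal.ofReal_mul (by norm_num : (0:ℝ) ≤ 2), ENNReal.ofReal_ofNat]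
    rw [hrw, ← hrw2] at hmain
    have := (ENNReal.ofReal_le_ofReal_iff
      (add_nonneg (by norm_num) (mul_nonneg hNN0 (by positivity)))).1 hmain
    linarith
  obtain ⟨⟨x, y⟩, hp, hple⟩ := key
  rw [Finset.mem_offDiag] at hp
  obtain ⟨hx, hy, hxy⟩ := hp
  simp only [hsdef, Finset.mem_Ico] at hx hy
  rcases lt_or_gt_of_ne (by simpa using hxy) with h | h
  · exact ⟨x, y, hx.1, h, hy.2, hple⟩
  · exact ⟨y, x, hy.1, h, hx.2, by rwa [Set.inter_comm]⟩

lemma main_lemma {X : Type*} [MeasurableSpace X] (μ : Measure X) [IsProbabilityMeasure μ] :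
    ∀ k : ℕ, 1 ≤ k → ∀ ε : ℝ, 0 < ε → ε ≤ 1/2 → ∀ A : ℕ → Set X,
      (∀ i, MeasurableSet (A i)) → (∀ i, ENNReal.ofReal ε ≤ μ (A i)) →
      ∃ i : Fin k → ℕ, StrictMono i ∧
        ENNReal.ofReal (ε ^ 3 ^ (k - 1)) ≤ μ (⋂ j : Fin k, A (i j)) := by
  intro k hk
  induction k, hk using Nat.le_induction with
  | base =>
    intro ε hε hε2 A hmeas hA
    refine ⟨fun _ => 0, Subsingleton.strictMono _, ?_⟩
    simpa [Set.iInter_const] using hA 0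
  | succ k hk ih =>
    intro ε hε hε2 A hmeas hA
    set N := ⌈2/ε⌉₊ with hNdef
    have H : ∀ m : ℕ, ∃ p : ℕ × ℕ, m*N ≤ p.1 ∧ p.1 < p.2 ∧ p.2 < m*N + N ∧
        ENNReal.ofReal (ε^3) ≤ μ (A p.1 ∩ A p.2) := by
      intro m
      obtain ⟨i, j, h1, h2, h3, h4⟩ := pair_lemma μ ε hε hε2 A hmeas hA (m*N)
      exact ⟨(i, j), h1, h2, h3, h4⟩
    choose f hf1 hf2 hf3 hf4 using H
    set B : ℕ → Set X := fun m => A (f m).1 ∩ A (f m).2 with hBdef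
    have hε3 : (0:ℝ) < ε^3 := by positivity
    have hε32 : ε^3 ≤ 1/2 := by
      have h := pow_le_pow_left₀ hε.le hε2 3
      norm_num at h
      linarith
    obtain ⟨g, hg, hgB⟩ := ih (ε^3) hε3 hε32 B
      (fun m => (hmeas _).inter (hmeas _)) hf4
    have hk0 : 0 < k := hk
    have hexp : ((ε^3) ^ 3 ^ (k-1)) = ε ^ 3 ^ (k+1-1) := by
      rw [← pow_mul]
      congr 1
      rw [← pow_succ']
      congr 1
      omega
    have hblock : ∀ m m', m < m' → (f m).2 < (f m').1 := by
      intro m m' hmm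
      calc (f m).2 < m*N + N := hf3 m
        _ = (m+1)*N := by ring
        _ ≤ m'*N := Nat.mul_le_mul_right N hmm
        _ ≤ (f m').1 := hf1 m'
    set h : Fin (k+1) → ℕ := fun l =>
      if hl : (l : ℕ) = 0 then (f (g ⟨0, hk0⟩)).1
      else (f (g ⟨(l:ℕ) - 1, by have := l.isLt; omega⟩)).2 with hhdef
    have hstep : ∀ x y : Fin k, x ≤ y → (f (g x)).1 < (f (g y)).2 := by
      intro x y hxy
      rcases eq_or_lt_of_le hxy with rfl | hlt
      · exact hf2 (g x)
      · exact lt_trans (hf2 (g x)) (lt_trans (hblock _ _ (hg hlt)) (hf2 (g y)))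
    have hmono : StrictMono h := by
      intro a b hab
      have hbne : (b:ℕ) ≠ 0 := by
        have : (a:ℕ) < (b:ℕ) := hab
        omega
      by_cases ha : (a:ℕ) = 0
      · rw [hhdef]
        simp only [ha, dif_pos, dif_neg hbne]
        exact hstep _ _ (by simp [Fin.le_def])
      · rw [hhdef]
        simp only [dif_neg ha, dif_neg hbne]
        have hord : g ⟨(a:ℕ)-1, by have := a.isLt; omega⟩
            < g ⟨(b:ℕ)-1, by have := b.isLt; omega⟩ := by
          apply hg
          have : (a:ℕ) < (b:ℕ) := hab
          simp only [Fin.mk_lt_mk]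
          omega
        exact lt_trans (hblock _ _ hord) (hf2 _)
    have hsub : (⋂ j : Fin k, B (g j)) ⊆ ⋂ l : Fin (k+1), A (h l) := by
      intro x hx
      simp only [Set.mem_iInter] at hx ⊢
      intro l
      by_cases hl : (l:ℕ) = 0
      · have hx0 := hx ⟨0, hk0⟩
        rw [hhdef]
        simp only [hl, dif_pos]
        exact hx0.1
      · have hx1 := hx ⟨(l:ℕ)-1, by have := l.isLt; omega⟩
        rw [hhdef]
        simp only [dif_neg hl]
        exact hx1.2
    refine ⟨h, hmono, ?_⟩
    calc ENNReal.ofReal (ε ^ 3 ^ (k+1-1)) = ENNReal.ofReal ((ε^3) ^ 3 ^ (k-1)) := by rw [hexp]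
      _ ≤ μ (⋂ j : Fin k, B (g j)) := hgB
      _ ≤ μ (⋂ l : Fin (k+1), A (h l)) := measure_mono hsub

/-- Proposition (k-wise intersections): in a probability space, if each `A i` has
measure at least `ε` (with `0 < ε ≤ 1/2`), then for every `k ≥ 1` there are indices
`i_1 < ... < i_k` whose intersection has measure at least `ε ^ 3 ^ (k - 1)`. -/
theorem stmt0 {X : Type*} [MeasurableSpace X] (μ : Measure X) [IsProbabilityMeasure μ]
    (ε : ℝ) (hε : 0 < ε) (hε2 : ε ≤ 1 / 2) (A : ℕ → Set X)
    (hmeas : ∀ i, MeasurableSet (A i)) (hA : ∀ i, ENNReal.ofReal ε ≤ μ (A i)) :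
    ∀ k : ℕ, 1 ≤ k → ∃ i : Fin k → ℕ, StrictMono i ∧
      ENNReal.ofReal (ε ^ 3 ^ (k - 1)) ≤ μ (⋂ j : Fin k, A (i j)) :=
  fun k hk => main_lemma μ k hk ε hε hε2 A hmeas hA
end

section
/- Let X be a probability space and 0 < ε ≤ 1/2. There exists N = N(ε) ∈ ℕ such that for any measurable sets A_1, ..., A_N with μ(A_i) ≥ ε for all i, there are indices 1 ≤ i < j ≤ N with μ(A_i ∩ A_j) ≥ ε^3. -/
open MeasureTheory ENNReal

private lemma nat_ineq_aux (m : ℕ) : 2 * m ≤ 2 + (m * m - m) := by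
  rcases m with _ | _ | k
  · simp
  · simp
  · show 2 * (k + 2) ≤ 2 + ((k + 2) * (k + 2) - (k + 2))
    have h : (k + 2) * (k + 2) = k * k + 4 * k + 4 := by ring
    rw [h]
    omega

private lemma pointwise_aux {X : Type*} (N : ℕ) (A : Fin N → Set X) (x : X) :
    2 * ∑ i, (A i).indicator (1 : X → ℝ≥0∞) x ≤
      2 + ∑ p ∈ (Finset.univ : Finset (Fin N)).offDiag,
        (A p.1 ∩ A p.2).indicator (1 : X → ℝ≥0∞) x := by
  classical
  set S : Finset (Fin N) := Finset.univ.filter (fun i => x ∈ A i) with hS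
  have hs : ∑ i, (A i).indicator (1 : X → ℝ≥0∞) x = (S.card : ℝ≥0∞) := by
    simp only [Set.indicator_apply, Pi.one_apply]
    rw [Finset.sum_boole]
  have hp : ∑ p ∈ (Finset.univ : Finset (Fin N)).offDiag,
      (A p.1 ∩ A p.2).indicator (1 : X → ℝ≥0∞) x = (S.offDiag.card : ℝ≥0∞) := by
    simp only [Set.indicator_apply, Pi.one_apply, Set.mem_inter_iff]
    rw [Finset.sum_boole]
    congr 2
    ext p
    simp only [Finset.mem_filter, Finset.mem_offDiag, hS, Finset.mem_univ, true_and]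
    tauto
  rw [hs, hp, Finset.offDiag_card]
  exact_mod_cast nat_ineq_aux S.card

/-- The quantitative `k = 2` case: there is `N = N(ε)` such that among any `N`
measurable sets of measure at least `ε`, two have intersection of measure at least `ε ^ 3`. -/
theorem stmt1 {X : Type*} [MeasurableSpace X] (μ : Measure X) [IsProbabilityMeasure μ]
    (ε : ℝ) (hε : 0 < ε) (hε2 : ε ≤ 1 / 2) :
    ∃ N : ℕ, ∀ A : Fin N → Set X, (∀ i, MeasurableSet (A i)) →
      (∀ i, ENNReal.ofReal ε ≤ μ (A i)) →
      ∃ i j : Fin N, i < j ∧ ENNReal.ofReal (ε ^ 3) ≤ μ (A i ∩ A j) := by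
  classical
  obtain ⟨N, hN1, hN2⟩ : ∃ N : ℕ, 1 / ε ^ 2 ≤ (N : ℝ) ∧ (N : ℝ) < 1 / ε ^ 2 + 1 :=
    ⟨⌈1 / ε ^ 2⌉₊, Nat.le_ceil _, Nat.ceil_lt_add_one (by positivity)⟩
  refine ⟨N, fun A hA hAε => ?_⟩
  by_contra hcon
  push_neg at hcon
  -- all off-diagonal pairs have small intersection
  have hpair : ∀ i j : Fin N, i ≠ j → μ (A i ∩ A j) ≤ ENNReal.ofReal (ε ^ 3) := by
    intro i j hij
    rcases lt_or_gt_of_ne hij with h | h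
    · exact (hcon i j h).le
    · rw [Set.inter_comm]; exact (hcon j i h).le
  -- the truncated inclusion-exclusion inequality
  have hmeas : ∀ i : Fin N, Measurable ((A i).indicator (1 : X → ℝ≥0∞)) :=
    fun i => measurable_one.indicator (hA i)
  have hmeas2 : ∀ p : Fin N × Fin N,
      Measurable ((A p.1 ∩ A p.2).indicator (1 : X → ℝ≥0∞)) :=
    fun p => measurable_one.indicator ((hA p.1).inter (hA p.2))
  have key : 2 * ∑ i, μ (A i) ≤
      2 + ∑ p ∈ (Finset.univ : Finset (Fin N)).offDiag, μ (A p.1 ∩ A p.2) := by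
    have h1 : ∑ i, μ (A i) = ∫⁻ x, ∑ i, (A i).indicator (1 : X → ℝ≥0∞) x ∂μ := by
      rw [lintegral_finset_sum _ (fun i _ => hmeas i)]
      simp_rw [lintegral_indicator_one (hA _)]
    have h2 : ∑ p ∈ (Finset.univ : Finset (Fin N)).offDiag, μ (A p.1 ∩ A p.2)
        = ∫⁻ x, ∑ p ∈ (Finset.univ : Finset (Fin N)).offDiag,
            (A p.1 ∩ A p.2).indicator (1 : X → ℝ≥0∞) x ∂μ := by
      rw [lintegral_finset_sum _ (fun p _ => hmeas2 p)]
      simp_rw [lintegral_indicator_one ((hA _).inter (hA _))]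
    rw [h1, h2, ← lintegral_const_mul 2 (Finset.measurable_sum _ (fun i _ => hmeas i))]
    calc ∫⁻ x, 2 * ∑ i, (A i).indicator (1 : X → ℝ≥0∞) x ∂μ
        ≤ ∫⁻ x, (2 + ∑ p ∈ (Finset.univ : Finset (Fin N)).offDiag,
            (A p.1 ∩ A p.2).indicator (1 : X → ℝ≥0∞) x) ∂μ :=
          lintegral_mono (fun x => pointwise_aux N A x)
      _ = 2 + ∫⁻ x, ∑ p ∈ (Finset.univ : Finset (Fin N)).offDiag,
            (A p.1 ∩ A p.2).indicator (1 : X → ℝ≥0∞) x ∂μ := by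
          rw [lintegral_add_left measurable_const, lintegral_const]
          simp
  -- lower bound the left side, upper bound the right side
  have hlow : (N : ℝ≥0∞) * ENNReal.ofReal ε ≤ ∑ i, μ (A i) := by
    calc (N : ℝ≥0∞) * ENNReal.ofReal ε = ∑ _i : Fin N, ENNReal.ofReal ε := by
          simp [Finset.sum_const, mul_comm]
      _ ≤ ∑ i, μ (A i) := Finset.sum_le_sum (fun i _ => hAε i)
  have hup : ∑ p ∈ (Finset.univ : Finset (Fin N)).offDiag, μ (A p.1 ∩ A p.2)
      ≤ ((N * N - N : ℕ) : ℝ≥0∞) * ENNReal.ofReal (ε ^ 3) := by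
    calc ∑ p ∈ (Finset.univ : Finset (Fin N)).offDiag, μ (A p.1 ∩ A p.2)
        ≤ ∑ _p ∈ (Finset.univ : Finset (Fin N)).offDiag, ENNReal.ofReal (ε ^ 3) :=
          Finset.sum_le_sum (fun p hp => hpair p.1 p.2 (Finset.mem_offDiag.mp hp).2.2)
      _ = ((N * N - N : ℕ) : ℝ≥0∞) * ENNReal.ofReal (ε ^ 3) := by
          rw [Finset.sum_const, Finset.offDiag_card]
          simp [Finset.card_univ, nsmul_eq_mul]
  have hcomb : 2 * ((N : ℝ≥0∞) * ENNReal.ofReal ε)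
      ≤ 2 + ((N * N - N : ℕ) : ℝ≥0∞) * ENNReal.ofReal (ε ^ 3) :=
    calc 2 * ((N : ℝ≥0∞) * ENNReal.ofReal ε) ≤ 2 * ∑ i, μ (A i) := mul_le_mul_right hlow 2
      _ ≤ 2 + ∑ p ∈ (Finset.univ : Finset (Fin N)).offDiag, μ (A p.1 ∩ A p.2) := key
      _ ≤ 2 + ((N * N - N : ℕ) : ℝ≥0∞) * ENNReal.ofReal (ε ^ 3) := add_le_add_right hup 2
  -- convert to a real inequality
  have hreal : 2 * ((N : ℝ) * ε) ≤ 2 + ((N * N - N : ℕ) : ℝ) * ε ^ 3 := by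
    have hL : 2 * ((N : ℝ≥0∞) * ENNReal.ofReal ε) = ENNReal.ofReal (2 * ((N : ℝ) * ε)) := by
      rw [ENNReal.ofReal_mul (by norm_num), ENNReal.ofReal_mul (by positivity)]
      simp
    have hR : (2 : ℝ≥0∞) + ((N * N - N : ℕ) : ℝ≥0∞) * ENNReal.ofReal (ε ^ 3)
        = ENNReal.ofReal (2 + ((N * N - N : ℕ) : ℝ) * ε ^ 3) := by
      rw [ENNReal.ofReal_add (by norm_num) (by positivity),
        ENNReal.ofReal_mul (by positivity)]
      simp
    rw [hL, hR] at hcomb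
    exact (ENNReal.ofReal_le_ofReal_iff (by positivity)).mp hcomb
  -- final arithmetic contradiction
  have hNpos : 0 < N := by
    have h1 : (1 : ℝ) ≤ 1 / ε ^ 2 := by
      rw [le_div_iff₀ (by positivity)]; nlinarith
    have : (1 : ℝ) ≤ (N : ℝ) := h1.trans hN1
    exact_mod_cast Nat.cast_pos.mp (lt_of_lt_of_le zero_lt_one this)
  have hle : N ≤ N * N := Nat.le_mul_of_pos_left N hNpos
  have hNN : ((N * N - N : ℕ) : ℝ) = (N : ℝ) * N - N := by
    rw [Nat.cast_sub hle]; push_cast; ring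
  rw [hNN] at hreal
  set n : ℝ := (N : ℝ) with hn
  have ha : 1 ≤ n * ε ^ 2 := by
    rw [div_le_iff₀ (by positivity)] at hN1; linarith [hN1]
  have hb : n * ε ^ 2 < 1 + ε ^ 2 := by
    have := mul_lt_mul_of_pos_right hN2 (show (0:ℝ) < ε ^ 2 by positivity)
    rw [add_mul, div_mul_cancel₀ _ (show (ε:ℝ) ^ 2 ≠ 0 by positivity)] at this
    linarith
  nlinarith [mul_le_mul_of_nonneg_right hreal hε.le, sq_nonneg (n * ε ^ 2 - 1),
    mul_pos hε hε, sq_nonneg (1 - ε - ε ^ 2), sq_nonneg ε,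
    mul_nonneg (sub_nonneg.mpr ha) (sq_nonneg ε), hε.le]
end

section
/- In a finite-dimensional vector space V over a finite field F, for vectors w_1,...,w_m, w'_1,...,w'_{m'} ∈ V, the set of u ∈ V such that u+w_1, ..., u+w_m, w'_1, ..., w'_{m'} are linearly independent equals the union of: (a) the complement of the span ⟨w_1,...,w_m,w'_1,...,w'_{m'}⟩, provided there is no nontrivial relation Σc_i w_i + Σd_i w'_i = 0 with Σc_i = 0 (and is empty if such a relation exists); together with (b) if w̄, w̄' are linearly independent, the set of u of the form Σc_i w_i + Σd_i w'_i with Σc_i ≠ −1. -/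
open Finset

private lemma sumSmulAdd {F : Type*} [Field F] {V : Type*} [AddCommGroup V] [Module F V]
    {m : ℕ} (a : Fin m → F) (u : V) (w : Fin m → V) :
    ∑ i, a i • (u + w i) = (∑ i, a i) • u + ∑ i, a i • w i := by
  simp [smul_add, Finset.sum_add_distrib, Finset.sum_smul]

private lemma smulSum {F : Type*} [Field F] {V : Type*} [AddCommGroup V] [Module F V]
    {m : ℕ} (r : F) (e : Fin m → F) (v : Fin m → V) :
    ∑ i, (r * e i) • v i = r • ∑ i, e i • v i := by
  rw [Finset.smul_sum]; simp [mul_smul]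

private lemma keyLI {F : Type*} [Field F] {V : Type*} [AddCommGroup V] [Module F V]
    {m m' : ℕ} (v : Fin m → V) (v' : Fin m' → V) :
    LinearIndependent F (Fin.append v v') ↔
      ∀ (a : Fin m → F) (b : Fin m' → F),
        (∑ i, a i • v i) + (∑ i, b i • v' i) = 0 → a = 0 ∧ b = 0 := by
  rw [Fintype.linearIndependent_iff]
  constructor
  · intro h a b hab
    have h0 : ∑ i : Fin (m + m'), Fin.append a b i • Fin.append v v' i = 0 := by
      rw [Fin.sum_univ_add]
      simpa using hab
    have hz := h (Fin.append a b) h0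
    constructor
    · funext i; simpa using hz (Fin.castAdd m' i)
    · funext i; simpa using hz (Fin.natAdd m i)
  · intro h g hg
    have hg' : (∑ i, g (Fin.castAdd m' i) • v i) + ∑ i, g (Fin.natAdd m i) • v' i = 0 := by
      rw [← hg, Fin.sum_univ_add]; simp
    obtain ⟨ha, hb⟩ := h _ _ hg'
    intro i
    refine Fin.addCases (motive := fun i => g i = 0) (fun j => ?_) (fun j => ?_) i
    · exact congrFun ha j
    · exact congrFun hb j

private lemma memSpan {F : Type*} [Field F] {V : Type*} [AddCommGroup V] [Module F V]
    {m m' : ℕ} (w : Fin m → V) (w' : Fin m' → V) (u : V) :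
    u ∈ Submodule.span F (Set.range w ∪ Set.range w') ↔
      ∃ (c : Fin m → F) (d : Fin m' → F), u = (∑ i, c i • w i) + ∑ i, d i • w' i := by
  rw [Submodule.span_union, Submodule.mem_sup]
  constructor
  · rintro ⟨x, hx, y, hy, rfl⟩
    rw [Submodule.mem_span_range_iff_exists_fun] at hx hy
    obtain ⟨c, hc⟩ := hx; obtain ⟨d, hd⟩ := hy
    exact ⟨c, d, by rw [hc, hd]⟩
  · rintro ⟨c, d, rfl⟩
    exact ⟨_, Submodule.mem_span_range_iff_exists_fun F |>.mpr ⟨c, rfl⟩,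
      _, Submodule.mem_span_range_iff_exists_fun F |>.mpr ⟨d, rfl⟩, rfl⟩

/-- Description of the set of `u` making `u + w₁, …, u + w_m, w'₁, …, w'_{m'}` linearly
independent: it is the complement of the span of all the given vectors provided there is no
nontrivial relation `Σ cᵢ wᵢ + Σ dᵢ w'ᵢ = 0` with `Σ cᵢ = 0`, together with (when
`w̄, w̄'` are linearly independent) the set of `u = Σ cᵢ wᵢ + Σ dᵢ w'ᵢ` with `Σ cᵢ ≠ -1`. -/
theorem stmt4 {F : Type*} [Field F] {V : Type*} [AddCommGroup V] [Module F V]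
    (m m' : ℕ) (w : Fin m → V) (w' : Fin m' → V) (u : V) :
    LinearIndependent F (Fin.append (fun i => u + w i) w') ↔
      ((u ∉ Submodule.span F (Set.range w ∪ Set.range w') ∧
        ∀ (c : Fin m → F) (d : Fin m' → F),
          (∑ i, c i • w i) + (∑ i, d i • w' i) = 0 → (∑ i, c i) = 0 →
            c = 0 ∧ d = 0) ∨
      (LinearIndependent F (Fin.append w w') ∧
        ∃ (c : Fin m → F) (d : Fin m' → F),
          u = (∑ i, c i • w i) + (∑ i, d i • w' i) ∧ (∑ i, c i) ≠ -1)) := by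
  rw [keyLI, keyLI, memSpan]
  constructor
  · intro h
    by_cases hu : ∃ (c : Fin m → F) (d : Fin m' → F),
        u = (∑ i, c i • w i) + ∑ i, d i • w' i
    · right
      obtain ⟨c, d, hcd⟩ := hu
      have hsum : (∑ i, c i) ≠ -1 := by
        intro hc
        have h0 : (∑ i, c i • (u + w i)) + ∑ i, d i • w' i = 0 := by
          rw [sumSmulAdd, hc, add_assoc, ← hcd]
          simp
        obtain ⟨hc0, _⟩ := h c d h0
        rw [hc0] at hc
        simp at hc
      refine ⟨?_, c, d, hcd, hsum⟩
      intro a b hab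
      set s := ∑ i, a i with hs
      set t := 1 + ∑ i, c i with htdef
      have ht : t ≠ 0 := by
        intro h0
        apply hsum
        have h0' : 1 + ∑ i, c i = 0 := htdef ▸ h0
        linear_combination h0'
      have key : (∑ i, (t * a i - s * c i) • (u + w i)) +
          ∑ i, (t * b i - s * d i) • w' i = 0 := by
        rw [sumSmulAdd]
        have e1 : ∑ i, (t * a i - s * c i) = t * s - s * ∑ i, c i := by
          simp [sub_smul, Finset.sum_sub_distrib, Finset.mul_sum, hs]
        have e2 : ∑ i, (t * a i - s * c i) • w i =
            t • (∑ i, a i • w i) - s • ∑ i, c i • w i := by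
          simp [sub_smul, mul_smul, Finset.sum_sub_distrib, ← smulSum]
        have e3 : ∑ i, (t * b i - s * d i) • w' i =
            t • (∑ i, b i • w' i) - s • ∑ i, d i • w' i := by
          simp [sub_smul, mul_smul, Finset.sum_sub_distrib, ← smulSum]
        rw [e1, e2, e3]
        have e4 : t * s - s * ∑ i, c i = s := by rw [htdef]; ring
        rw [e4, hcd]
        have e5 : t • ((∑ i, a i • w i) + ∑ i, b i • w' i) = 0 := by rw [hab, smul_zero]
        rw [smul_add] at e5
        rw [smul_add]
        abel_nf
        abel_nf at e5
        -- remaining: combine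
        linear_combination (norm := abel) e5
      obtain ⟨ha', hb'⟩ := h _ _ key
      have hA : ∀ i, t * a i = s * c i := by
        intro i
        have := congrFun ha' i
        simp only [Pi.zero_apply] at this
        linear_combination this
      have hB : ∀ i, t * b i = s * d i := by
        intro i
        have := congrFun hb' i
        simp only [Pi.zero_apply] at this
        linear_combination this
      have hs0 : s = 0 := by
        have : t * s = s * ∑ i, c i := by
          rw [hs, Finset.mul_sum, Finset.mul_sum]
          exact Finset.sum_congr rfl fun i _ => hA i
        rw [htdef] at this
        linear_combination this
      constructor
      · funext i
        have := hA i
        rw [hs0, zero_mul] at this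
        exact (mul_eq_zero.mp this).resolve_left ht
      · funext i
        have := hB i
        rw [hs0, zero_mul] at this
        exact (mul_eq_zero.mp this).resolve_left ht
    · left
      refine ⟨hu, ?_⟩
      intro c d hrel hsum
      apply h c d
      rw [sumSmulAdd, hsum, zero_smul, zero_add, hrel]
  · rintro (⟨hu, hrel⟩ | ⟨hli, c, d, hcd, hsum⟩)
    · intro a b hab
      rw [sumSmulAdd] at hab
      set s := ∑ i, a i with hs
      by_cases hs0 : s = 0
      · rw [hs0, zero_smul, zero_add] at hab
        exact hrel a b hab (hs ▸ hs0)
      · exfalso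
        apply hu
        refine ⟨fun i => -(s⁻¹ * a i), fun i => -(s⁻¹ * b i), ?_⟩
        have h1 : s • u = -((∑ i, a i • w i) + ∑ i, b i • w' i) :=
          eq_neg_of_add_eq_zero_left (by rw [← add_assoc]; exact hab)
        have h2 : u = s⁻¹ • -((∑ i, a i • w i) + ∑ i, b i • w' i) := by
          rw [← h1, inv_smul_smul₀ hs0]
        rw [h2]
        simp [neg_smul, mul_smul, smul_add, smul_neg, Finset.sum_neg_distrib,
          ← Finset.smul_sum]
        abel
    · intro a b hab
      rw [sumSmulAdd, hcd] at hab
      set s := ∑ i, a i with hs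
      have key : (∑ i, (s * c i + a i) • w i) + ∑ i, (s * d i + b i) • w' i = 0 := by
        have e2 : ∑ i, (s * c i + a i) • w i =
            s • (∑ i, c i • w i) + ∑ i, a i • w i := by
          simp [add_smul, Finset.sum_add_distrib, ← smulSum]
        have e3 : ∑ i, (s * d i + b i) • w' i =
            s • (∑ i, d i • w' i) + ∑ i, b i • w' i := by
          simp [add_smul, Finset.sum_add_distrib, ← smulSum]
        rw [e2, e3]
        rw [smul_add] at hab
        linear_combination (norm := abel) hab
      obtain ⟨ha', hb'⟩ := hli _ _ key
      have hs0 : s = 0 := by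
        have hsum' : s * (∑ i, c i) + s = 0 := by
          have h6 : ∑ i, (s * c i + a i) = 0 := by rw [ha']; simp
          rw [Finset.sum_add_distrib, ← Finset.mul_sum, ← hs] at h6
          exact h6
        have hne : (∑ i, c i) + 1 ≠ 0 := by
          intro h0; apply hsum; linear_combination h0
        have h7 : s * ((∑ i, c i) + 1) = 0 := by linear_combination hsum'
        exact (mul_eq_zero.mp h7).resolve_right hne
      constructor
      · funext i
        have := congrFun ha' i
        simp [hs0] at this
        simpa using this
      · funext i
        have := congrFun hb' i
        simp [hs0] at this
        simpa using this
end

section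
/- Let V be an n-dimensional vector space over a finite field F with |F| = q, and let w_1,...,w_m, w'_1,...,w'_{m'} ∈ V be such that the list (w_1,...,w_m,w'_1,...,w'_{m'}) is linearly independent. Then the number of u ∈ V such that (u+w_1,...,u+w_m,w'_1,...,w'_{m'}) is linearly independent equals q^n − q^{m+m'} + (q^{m+m'} − q^{m+m'−1}) = q^n − q^{m+m'−1} (when m ≥ 1). -/
open Finset Submodule Function

section Aux

variable {F : Type*} [Field F] {V : Type*} [AddCommGroup V] [Module F V]
variable {m m' : ℕ}

private lemma append_comp_finSumFinEquiv (f : Fin m → V) (g : Fin m' → V) :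
    Fin.append f g ∘ finSumFinEquiv = Sum.elim f g := by
  funext x
  cases x with
  | inl i => simp [Fin.append_left]
  | inr j => simp [Fin.append_right]

private lemma sum_smul_sub (w : Fin m → V) (c : Fin m → F) (i0 : Fin m) :
    ∑ i, c i • (w i - w i0) =
      ∑ i, (c i - if i = i0 then ∑ k, c k else 0) • w i := by
  simp only [smul_sub, sub_smul, Finset.sum_sub_distrib, ite_smul, zero_smul,
    Finset.sum_ite_eq', Finset.mem_univ, if_true, ← Finset.sum_smul]

/-- Key characterization: `(u + wᵢ, w'ⱼ)` is linearly independent iff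
`u + w i0` is outside the span of `(wᵢ - w i0, w'ⱼ)`. -/
private lemma key (w : Fin m → V) (w' : Fin m' → V) (i0 : Fin m)
    (hindep : LinearIndependent F (Sum.elim w w')) (u : V) :
    LinearIndependent F (Sum.elim (fun i => u + w i) w') ↔
      u + w i0 ∉ span F (Set.range (Sum.elim (fun i => w i - w i0) w')) := by
  constructor
  · -- contrapositive: membership implies dependence
    intro hli hmem
    obtain ⟨c, hc⟩ := mem_span_range_iff_exists_fun F |>.1 hmem
    rw [Fintype.sum_sum_type] at hc
    simp only [Sum.elim_inl, Sum.elim_inr] at hc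
    set a : Fin m → F := fun i =>
      (c (.inl i) - if i = i0 then ∑ k, c (.inl k) else 0) - (if i = i0 then 1 else 0) with ha
    have ha_sum : ∑ i, a i = -1 := by
      simp only [ha, Finset.sum_sub_distrib, Finset.sum_ite_eq', Finset.mem_univ, if_true]
      ring
    have hu : ∑ i, a i • w i + ∑ j, c (.inr j) • w' j = u := by
      have h1 : ∑ i, a i • w i = (∑ i, c (.inl i) • (w i - w i0)) - w i0 := by
        rw [sum_smul_sub]
        simp only [ha, sub_smul, Finset.sum_sub_distrib, ite_smul, one_smul, zero_smul,
          Finset.sum_ite_eq', Finset.mem_univ, if_true]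
      rw [h1, sub_add_eq_add_sub, hc, add_sub_cancel_right]
    have h0 := Fintype.linearIndependent_iff.1 hli (Sum.elim a fun j => c (.inr j)) ?_
    · have : ∑ i, a i = 0 := by
        apply Finset.sum_eq_zero
        intro i _
        simpa using h0 (.inl i)
      rw [ha_sum] at this
      exact one_ne_zero (neg_eq_zero.1 this)
    · rw [Fintype.sum_sum_type]
      simp only [Sum.elim_inl, Sum.elim_inr]
      have h2 : ∑ i, a i • (u + w i) = (∑ i, a i) • u + ∑ i, a i • w i := by
        simp [smul_add, Finset.sum_add_distrib, Finset.sum_smul]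
      rw [h2, ha_sum, add_assoc, hu, neg_one_smul, neg_add_cancel]
  · -- no membership implies independence
    intro hmem
    rw [Fintype.linearIndependent_iff]
    intro g hg
    rw [Fintype.sum_sum_type] at hg
    simp only [Sum.elim_inl, Sum.elim_inr] at hg
    set a : Fin m → F := fun i => g (.inl i) with hadef
    set b : Fin m' → F := fun j => g (.inr j) with hbdef
    have hg' : (∑ i, a i) • u + (∑ i, a i • w i + ∑ j, b j • w' j) = 0 := by
      have h2 : ∑ i, a i • (u + w i) = (∑ i, a i) • u + ∑ i, a i • w i := by
        simp [smul_add, Finset.sum_add_distrib, Finset.sum_smul]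
      rw [← add_assoc, ← h2]
      exact hg
    set s : F := ∑ i, a i with hsdef
    by_cases hs : s = 0
    · rw [hs, zero_smul, zero_add] at hg'
      have h0 := Fintype.linearIndependent_iff.1 hindep (Sum.elim a b) ?_
      · intro x
        cases x with
        | inl i => simpa using h0 (.inl i)
        | inr j => simpa using h0 (.inr j)
      · rw [Fintype.sum_sum_type]
        simpa using hg'
    · exfalso
      apply hmem
      rw [mem_span_range_iff_exists_fun]
      refine ⟨Sum.elim (fun i => -s⁻¹ * a i + if i = i0 then 1 else 0)
        (fun j => -s⁻¹ * b j), ?_⟩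
      rw [Fintype.sum_sum_type]
      simp only [Sum.elim_inl, Sum.elim_inr]
      set t : Fin m → F := fun i => -s⁻¹ * a i + if i = i0 then 1 else 0 with htdef
      have hts : ∑ i, t i = 0 := by
        simp only [htdef, Finset.sum_add_distrib, Finset.sum_ite_eq', Finset.mem_univ,
          if_true, ← Finset.mul_sum, ← hsdef]
        rw [neg_mul, inv_mul_cancel₀ hs]
        ring
      have h3 : ∑ i, t i • (w i - w i0) = ∑ i, t i • w i := by
        rw [sum_smul_sub, hts]
        simp
      have h4 : ∑ i, t i • w i = (-s⁻¹) • (∑ i, a i • w i) + w i0 := by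
        simp only [htdef, add_smul, ite_smul, one_smul, zero_smul, Finset.sum_add_distrib,
          Finset.sum_ite_eq', Finset.mem_univ, if_true, mul_smul, ← Finset.smul_sum]
      have h5 : ∑ j, (-s⁻¹ * b j) • w' j = (-s⁻¹) • (∑ j, b j • w' j) := by
        simp only [mul_smul, ← Finset.smul_sum]
      rw [h3, h4, h5]
      have h6 : ∑ i, a i • w i + ∑ j, b j • w' j = -(s • u) :=
        eq_neg_of_add_eq_zero_right (by linear_combination (norm := module) hg')
      have : (-s⁻¹) • (∑ i, a i • w i) + w i0 + (-s⁻¹) • (∑ j, b j • w' j)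
          = (-s⁻¹) • (∑ i, a i • w i + ∑ j, b j • w' j) + w i0 := by
        rw [smul_add]; abel
      rw [this, h6]
      rw [smul_neg, neg_smul, neg_neg, smul_smul, inv_mul_cancel₀ hs, one_smul]

/-- The restricted family `(wᵢ - w i0 for i ≠ i0, w'ⱼ)` is linearly independent. -/
private lemma indep_restricted (w : Fin m → V) (w' : Fin m' → V) (i0 : Fin m)
    (hindep : LinearIndependent F (Sum.elim w w')) :
    LinearIndependent F (fun x : {x : Fin m ⊕ Fin m' // x ≠ Sum.inl i0} =>
      Sum.elim (fun i => w i - w i0) w' x.1) := by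
  classical
  rw [Fintype.linearIndependent_iff]
  intro g hg
  set G : Fin m ⊕ Fin m' → F := fun x => if hx : x = Sum.inl i0 then 0 else g ⟨x, hx⟩
    with hGdef
  have hsum : ∑ x : Fin m ⊕ Fin m', G x • Sum.elim (fun i => w i - w i0) w' x = 0 := by
    rw [← Finset.add_sum_erase _ (fun x => G x • Sum.elim (fun i => w i - w i0) w' x)
      (Finset.mem_univ (Sum.inl i0))]
    have h1 : G (Sum.inl i0) = 0 := by simp [hGdef]
    rw [h1, zero_smul, zero_add]
    rw [Finset.sum_subtype (p := fun x => x ≠ Sum.inl i0) _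
      (fun x => by simp [Finset.mem_erase])
      (fun x => G x • Sum.elim (fun i => w i - w i0) w' x)]
    rw [← hg]
    apply Finset.sum_congr rfl
    intro x _
    congr 1
    simp [hGdef, x.2]
  rw [Fintype.sum_sum_type] at hsum
  simp only [Sum.elim_inl, Sum.elim_inr] at hsum
  rw [sum_smul_sub] at hsum
  have h0 := Fintype.linearIndependent_iff.1 hindep
    (Sum.elim (fun i => G (.inl i) - if i = i0 then ∑ k, G (.inl k) else 0)
      (fun j => G (.inr j))) ?_
  · intro x
    obtain ⟨x, hx⟩ := x
    cases x with
    | inl i =>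
      have hi : i ≠ i0 := fun h => hx (by rw [h])
      have := h0 (.inl i)
      simp only [Sum.elim_inl, if_neg hi, sub_zero] at this
      simpa [hGdef, dif_neg hx] using this
    | inr j =>
      have := h0 (.inr j)
      simpa [hGdef] using this
  · rw [Fintype.sum_sum_type]
    simpa using hsum

end Aux

/-- Counting: if `V` is an `n`-dimensional vector space over a finite field `F` with `q`
elements and `(w₁, …, w_m, w'₁, …, w'_{m'})` is linearly independent with `m ≥ 1`, then the
number of `u ∈ V` such that `(u + w₁, …, u + w_m, w'₁, …, w'_{m'})` is linearly independent
equals `q ^ n - q ^ (m + m' - 1)`. -/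
theorem stmt5 {F : Type*} [Field F] [Fintype F] {V : Type*} [AddCommGroup V] [Module F V]
    [Module.Finite F V] (n : ℕ) (hn : Module.finrank F V = n)
    (q : ℕ) (hq : Fintype.card F = q)
    (m m' : ℕ) (hm : 1 ≤ m) (w : Fin m → V) (w' : Fin m' → V)
    (hindep : LinearIndependent F (Fin.append w w')) :
    Nat.card {u : V // LinearIndependent F (Fin.append (fun i => u + w i) w')} =
      q ^ n - q ^ (m + m' - 1) := by
  classical
  set i0 : Fin m := ⟨0, hm⟩
  have hind' : LinearIndependent F (Sum.elim w w') := by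
    rw [← append_comp_finSumFinEquiv w w']
    exact (linearIndependent_equiv finSumFinEquiv).2 hindep
  set S : Submodule F V :=
    Submodule.span F (Set.range (Sum.elim (fun i => w i - w i0) w')) with hS
  have hiff : ∀ u : V, LinearIndependent F (Fin.append (fun i => u + w i) w') ↔
      u + w i0 ∉ S := by
    intro u
    rw [hS, ← key w w' i0 hind' u, ← append_comp_finSumFinEquiv (fun i => u + w i) w']
    exact (linearIndependent_equiv finSumFinEquiv).symm
  -- finiteness
  haveI : Finite V := Module.finite_of_finite F
  haveI : Fintype V := Fintype.ofFinite V
  -- the span equals the span of the restricted (independent) family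
  have hSeq : S = Submodule.span F (Set.range
      (fun x : {x : Fin m ⊕ Fin m' // x ≠ Sum.inl i0} =>
        Sum.elim (fun i => w i - w i0) w' x.1)) := by
    apply le_antisymm
    · rw [hS, Submodule.span_le]
      rintro v ⟨x, rfl⟩
      by_cases hx : x = Sum.inl i0
      · subst hx
        simp only [Sum.elim_inl, sub_self]
        exact Submodule.zero_mem _
      · exact Submodule.subset_span ⟨⟨x, hx⟩, rfl⟩
    · rw [Submodule.span_le]
      rintro v ⟨x, rfl⟩
      exact Submodule.subset_span ⟨x.1, rfl⟩
  have hrank : Module.finrank F S = m + m' - 1 := by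
    rw [hSeq, finrank_span_eq_card (indep_restricted w w' i0 hind')]
    rw [Fintype.card_subtype_compl, Fintype.card_subtype_eq, Fintype.card_sum,
      Fintype.card_fin, Fintype.card_fin]
  have hcardS : Nat.card S = q ^ (m + m' - 1) := by
    haveI : Fintype S := Fintype.ofFinite S
    rw [Nat.card_eq_fintype_card, Module.card_eq_pow_finrank (K := F) (V := S), hq, hrank]
  have hcardV : Nat.card V = q ^ n := by
    rw [Nat.card_eq_fintype_card, Module.card_eq_pow_finrank (K := F) (V := V), hq, hn]
  -- the bad set is in bijection with S
  have hbad : Nat.card {u : V // u + w i0 ∈ S} = q ^ (m + m' - 1) := by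
    rw [← hcardS]
    apply Nat.card_congr
    exact {
      toFun := fun u => ⟨u.1 + w i0, u.2⟩
      invFun := fun s => ⟨s.1 - w i0, by simpa using s.2⟩
      left_inv := fun u => by simp
      right_inv := fun s => by simp }
  -- put everything together
  have h1 : Nat.card {u : V // LinearIndependent F (Fin.append (fun i => u + w i) w')}
      = Nat.card {u : V // u + w i0 ∉ S} :=
    Nat.card_congr (Equiv.subtypeEquivRight hiff)
  rw [h1]
  have h2 : Nat.card {u : V // u + w i0 ∉ S}
      = Nat.card V - Nat.card {u : V // u + w i0 ∈ S} := by
    haveI : Fintype {u : V // u + w i0 ∈ S} := Fintype.ofFinite _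
    haveI : Fintype {u : V // u + w i0 ∉ S} := Fintype.ofFinite _
    rw [Nat.card_eq_fintype_card, Nat.card_eq_fintype_card, Nat.card_eq_fintype_card]
    rw [← Fintype.card_subtype_compl]
  rw [h2, hbad, hcardV]
end

section
/- For every k ∈ ℕ there are, up to isomorphism, only finitely many finite groups having exactly k conjugacy classes. -/
open Multiset in
lemma unitFracBound : ∀ (k : ℕ) (q : ℚ), 0 < q →
    ∃ B : ℕ, ∀ s : Multiset ℕ, s.card = k → (∀ n ∈ s, 0 < n) →
      (s.map fun n : ℕ => (1 : ℚ) / (n : ℚ)).sum = q → ∀ n ∈ s, n ≤ B := by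
  intro k
  induction k with
  | zero =>
    intro q hq
    refine ⟨0, fun s hs _ _ n hn => ?_⟩
    rw [Multiset.card_eq_zero] at hs
    simp [hs] at hn
  | succ k ih =>
    intro q hq
    set M : ℕ := ⌈((k : ℚ) + 1) / q⌉₊ with hM
    have H : ∀ m : ℕ, ∃ B : ℕ, 0 < q - 1 / m → ∀ s : Multiset ℕ, s.card = k →
        (∀ n ∈ s, 0 < n) → (s.map fun n : ℕ => (1 : ℚ) / (n : ℚ)).sum = q - 1 / m →
        ∀ n ∈ s, n ≤ B := by
      intro m
      by_cases h : 0 < q - 1 / m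
      · obtain ⟨B, hB⟩ := ih _ h
        exact ⟨B, fun _ => hB⟩
      · exact ⟨0, fun h' => absurd h' h⟩
    choose g hg using H
    refine ⟨max M ((Finset.range (M + 1)).sup g), ?_⟩
    intro s hcard hpos hsum n hn
    have hne : s ≠ 0 := by
      intro h; rw [h] at hcard; simp at hcard
    have hfne : s.toFinset.Nonempty := by
      rwa [Multiset.toFinset_nonempty]
    set m : ℕ := s.toFinset.min' hfne with hm
    have hmem : m ∈ s := Multiset.mem_toFinset.mp (s.toFinset.min'_mem hfne)
    have hmin : ∀ x ∈ s, m ≤ x := fun x hx =>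
      s.toFinset.min'_le x (Multiset.mem_toFinset.mpr hx)
    have hmpos : 0 < m := hpos m hmem
    -- each term ≤ 1/m
    have hterm : ∀ x ∈ s.map fun n : ℕ => (1 : ℚ) / (n : ℚ), x ≤ 1 / m := by
      intro x hx
      obtain ⟨a, ha, rfl⟩ := Multiset.mem_map.mp hx
      have hapos : (0 : ℚ) < a := by exact_mod_cast hpos a ha
      have : (m : ℚ) ≤ a := by exact_mod_cast hmin a ha
      exact one_div_le_one_div_of_le (by exact_mod_cast hmpos) this
    have hsumle : q ≤ ((k : ℚ) + 1) * (1 / m) := by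
      have := Multiset.sum_le_card_nsmul _ _ hterm
      rw [Multiset.card_map, hcard] at this
      rw [← hsum]
      calc (s.map fun n : ℕ => (1 : ℚ) / (n : ℚ)).sum ≤ (k + 1) • ((1:ℚ)/m) := this
        _ = ((k : ℚ) + 1) * (1 / m) := by push_cast [nsmul_eq_mul]; ring
    have hmM : m ≤ M := by
      have hmq : (0 : ℚ) < m := by exact_mod_cast hmpos
      have h1 : (m : ℚ) ≤ ((k : ℚ) + 1) / q := by
        rw [le_div_iff₀ hq]
        calc (m : ℚ) * q ≤ (m : ℚ) * (((k : ℚ) + 1) * (1 / m)) := by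
              exact mul_le_mul_of_nonneg_left hsumle (le_of_lt hmq)
          _ = (k : ℚ) + 1 := by field_simp
      calc (m : ℕ) ≤ ⌈(m : ℚ)⌉₊ := by simp
        _ ≤ M := Nat.ceil_le_ceil h1
    set t : Multiset ℕ := s.erase m with ht
    have hst : s = m ::ₘ t := (Multiset.cons_erase hmem).symm
    have htcard : t.card = k := by
      have := congrArg Multiset.card hst
      rw [hcard, Multiset.card_cons] at this
      omega
    have htpos : ∀ x ∈ t, 0 < x := fun x hx => hpos x (by rw [hst]; exact Multiset.mem_cons_of_mem hx)
    have htsum : (t.map fun n : ℕ => (1 : ℚ) / (n : ℚ)).sum = q - 1 / m := by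
      rw [hst, Multiset.map_cons, Multiset.sum_cons] at hsum
      linarith
    have htnn : (0:ℚ) ≤ (t.map fun n : ℕ => (1 : ℚ) / (n : ℚ)).sum := by
      apply Multiset.sum_nonneg
      intro x hx
      obtain ⟨a, ha, rfl⟩ := Multiset.mem_map.mp hx
      positivity
    rw [hst] at hn
    rcases Multiset.mem_cons.mp hn with rfl | hnt
    · exact le_trans hmM (le_max_left _ _)
    · by_cases hc : 0 < q - 1 / m
      · have := hg m hc t htcard htpos htsum n hnt
        refine le_trans this (le_trans ?_ (le_max_right _ _))
        exact Finset.le_sup (Finset.mem_range.mpr (Nat.lt_succ_of_le hmM))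
      · exfalso
        have h0 : (t.map fun n : ℕ => (1 : ℚ) / (n : ℚ)).sum = 0 := le_antisymm (by rw [htsum]; linarith) htnn
        have : (1 : ℚ) / n ≤ 0 := by
          rw [← h0]
          apply Multiset.single_le_sum (fun x hx => ?_) _ (Multiset.mem_map_of_mem _ hnt)
          obtain ⟨a, ha, rfl⟩ := Multiset.mem_map.mp hx
          positivity
        have hnpos : (0:ℚ) < n := by exact_mod_cast htpos n hnt
        have : (0:ℚ) < 1 / n := by positivity
        linarith

/-- Landau's theorem: for every `k` there are, up to isomorphism, only finitely many finite
groups with exactly `k` conjugacy classes; equivalently, there is a bound `n = n(k)` on the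
order of any finite group with exactly `k` conjugacy classes. -/
theorem stmt11 (k : ℕ) :
    ∃ n : ℕ, ∀ (G : Type) [Group G] [Finite G],
      Nat.card (ConjClasses G) = k → Nat.card G ≤ n := by
  obtain ⟨B, hB⟩ := unitFracBound k 1 one_pos
  refine ⟨B, ?_⟩
  intro G _ _ hk
  classical
  have : Fintype G := Fintype.ofFinite G
  have : Fintype (ConjClasses G) := Fintype.ofFinite _
  have hGpos : 0 < Nat.card G := Nat.card_pos
  -- the multiset of "indices" |G| / |class|
  set f : ConjClasses G → ℕ := fun c => Nat.card G / Nat.card c.carrier with hf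
  set s : Multiset ℕ := Finset.univ.val.map f with hs
  have hdvd : ∀ c : ConjClasses G, Nat.card c.carrier ∣ Nat.card G := by
    intro c
    obtain ⟨g, rfl⟩ := c.exists_rep
    have h1 : (ConjClasses.mk g).carrier = MulAction.orbit (ConjAct G) g :=
      (ConjAct.orbit_eq_carrier_conjClasses g).symm
    rw [h1]
    have := MulAction.card_orbit_mul_card_stabilizer_eq_card_group (ConjAct G) g
    have hcc : Nat.card (ConjAct G) = Nat.card G := Nat.card_congr ConjAct.toConjAct.toEquiv.symm
    simp only [Nat.card_eq_fintype_card] at hcc ⊢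
    exact ⟨_, by rw [← hcc, ← this]⟩
  have hcpos : ∀ c : ConjClasses G, 0 < Nat.card c.carrier := by
    intro c
    obtain ⟨g, rfl⟩ := c.exists_rep
    have : Nonempty (ConjClasses.mk g).carrier := ⟨⟨g, ConjClasses.mem_carrier_mk⟩⟩
    exact Nat.card_pos
  have hcard : s.card = k := by
    rw [hs, Multiset.card_map]
    simpa [Nat.card_eq_fintype_card] using hk
  have hpos : ∀ n ∈ s, 0 < n := by
    intro n hn
    obtain ⟨c, _, rfl⟩ := Multiset.mem_map.mp hn
    exact Nat.div_pos (Nat.le_of_dvd hGpos (hdvd c)) (hcpos c)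
  have hsum : (s.map fun n : ℕ => (1 : ℚ) / (n : ℚ)).sum = 1 := by
    rw [hs, Multiset.map_map]
    have key : ∀ c : ConjClasses G,
        ((fun n : ℕ => (1 : ℚ) / (n : ℚ)) ∘ f) c = (Nat.card c.carrier : ℚ) / Nat.card G := by
      intro c
      obtain ⟨d, hd⟩ := hdvd c
      have hdpos : 0 < d := by
        rcases Nat.eq_zero_or_pos d with h | h
        · rw [h, mul_zero] at hd; omega
        · exact h
      simp only [Function.comp, hf, hd, Nat.mul_div_cancel_left _ (hcpos c)]
      have h1 : ((Nat.card c.carrier : ℚ)) ≠ 0 := by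
        exact_mod_cast (hcpos c).ne'
      have h2 : ((d : ℚ)) ≠ 0 := by exact_mod_cast hdpos.ne'
      simp only [Nat.card_eq_fintype_card] at h1 ⊢
      push_cast
      rw [mul_comm, ← div_div, div_right_comm, div_self h1]
    have : (Finset.univ.val.map ((fun n : ℕ => (1 : ℚ) / (n : ℚ)) ∘ f)).sum
        = ∑ c : ConjClasses G, (Nat.card c.carrier : ℚ) / Nat.card G :=
      Finset.sum_congr rfl fun c _ => key c
    rw [this, ← Finset.sum_div]
    have hsc : ∑ c : ConjClasses G, (Nat.card c.carrier : ℚ) = (Nat.card G : ℚ) := by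
      have := sum_conjClasses_card_eq_card G
      have h2 : ∑ c : ConjClasses G, Nat.card c.carrier = Nat.card G := by
        rw [Nat.card_eq_fintype_card, ← this]
        exact Finset.sum_congr rfl fun c _ => by
          rw [Nat.card_eq_fintype_card, Set.toFinset_card]
      exact_mod_cast h2
    rw [hsc, div_self (by exact_mod_cast hGpos.ne')]
  have hmemG : Nat.card G ∈ s := by
    refine Multiset.mem_map.mpr ⟨1, Finset.mem_univ_val _, ?_⟩
    have hcar : (1 : ConjClasses G).carrier = {1} := by
      ext x
      rw [ConjClasses.one_eq_mk_one, ConjClasses.mem_carrier_iff_mk_eq,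
        ConjClasses.mk_eq_mk_iff_isConj, isConj_one_left]
      rfl
    rw [hf]
    simp only [hcar]
    rw [Nat.card_coe_set_eq, Set.ncard_singleton, Nat.div_one]
  exact hB s hcard hpos hsum _ hmemG
end
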